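/- Let S be a monoid, A an S-act, and Σ = Σ(X) a consistent set of equations over A, with A(Σ) = (A ⊔ F_S(X))/κ_Σ where κ_Σ = ⟨H(Σ) ∪ K(Σ)⟩. Then Σ has a solution in A if and only if A is a retract of A(Σ) (identifying A with its image in A(Σ)). -/

import Mathlib

universe u v w

/-- A right `S`-act: a set with an action `A × S → A` with `a·1 = a`, `a·(st) = (a·s)·t`. -/
class RAct (S : Type u) [Monoid S] (A : Type v) where
  act : A → S → A
  act_one : ∀ a : A, act a 1 = a
  act_mul : ∀ (a : A) (s t : S), act a (s * t) = act (act a s) t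

infixl:70 " ⊳ " => RAct.act

/-- An `S`-morphism of right `S`-acts. -/
def IsRActHom (S : Type u) [Monoid S] {A : Type v} {B : Type w}
    [RAct S A] [RAct S B] (f : A → B) : Prop :=
  ∀ (a : A) (s : S), f (a ⊳ s) = f a ⊳ s

/-- The free `S`-act `F_S(X) = X × S`, with `(x,s)·t = (x, st)`. -/
instance freeAct (S : Type u) [Monoid S] (X : Type w) : RAct S (X × S) where
  act p s := (p.1, p.2 * s)
  act_one p := by simp
  act_mul p s t := by simp [mul_assoc]

/-- Disjoint union of two `S`-acts. -/
instance sumAct (S : Type u) [Monoid S] {A : Type v} {B : Type w} [RAct S A] [RAct S B] :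
    RAct S (A ⊕ B) where
  act x s := Sum.elim (fun a => Sum.inl (a ⊳ s)) (fun b => Sum.inr (b ⊳ s)) x
  act_one := by rintro (a | b) <;> simp [RAct.act_one]
  act_mul := by rintro (a | b) s t <;> simp [RAct.act_mul]

/-- Congruence on a right `S`-act. -/
structure IsActCongr (S : Type u) [Monoid S] {A : Type v} [RAct S A]
    (r : A → A → Prop) : Prop where
  refl : ∀ a, r a a
  symm : ∀ {a b}, r a b → r b a
  trans : ∀ {a b c}, r a b → r b c → r a c
  act : ∀ {a b} (s : S), r a b → r (a ⊳ s) (b ⊳ s)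

/-- The act congruence generated by a set of pairs `H`. -/
def congGen (S : Type u) [Monoid S] {A : Type v} [RAct S A]
    (H : Set (A × A)) (a b : A) : Prop :=
  ∀ r : A → A → Prop, IsActCongr S r → (∀ p ∈ H, r p.1 p.2) → r a b

theorem isActCongr_congGen (S : Type u) [Monoid S] {A : Type v} [RAct S A]
    (H : Set (A × A)) : IsActCongr S (congGen S H) where
  refl a := fun _r hr _ => hr.refl a
  symm h := fun r hr hH => hr.symm (h r hr hH)
  trans h1 h2 := fun r hr hH => hr.trans (h1 r hr hH) (h2 r hr hH)
  act s h := fun r hr hH => hr.act s (h r hr hH)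

/-- Equations over an `S`-act `A` with variables from `X`:
`xs = yt` (which includes `xs = xt`) or `xs = a`. -/
inductive Eqn (S : Type u) (A : Type v) (X : Type w) where
  | vv : X → S → X → S → Eqn S A X
  | vc : X → S → A → Eqn S A X

/-- `b : X → C` is a solution of `E` in the act `C`, where `ι : A → C` interprets constants. -/
def IsSolution (S : Type u) [Monoid S] {A : Type v} {X : Type w} {C : Type*}
    [RAct S C] (ι : A → C) (E : Set (Eqn S A X)) (b : X → C) : Prop :=
  (∀ x s y t, Eqn.vv x s y t ∈ E → b x ⊳ s = b y ⊳ t) ∧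
  (∀ x s a, Eqn.vc x s a ∈ E → b x ⊳ s = ι a)

/-- A set of equations over `A` is consistent if it has a solution in some act containing `A`. -/
def Consistent (S : Type u) [Monoid S] {A : Type v} {X : Type w} [RAct S A]
    (E : Set (Eqn S A X)) : Prop :=
  ∃ (B : Type (max u v w)) (_ : RAct S B) (ι : A → B),
    Function.Injective ι ∧ IsRActHom S ι ∧ ∃ b : X → B, IsSolution S ι E b

/-- `A` is `n`-absolutely pure: every finite consistent system of equations over `A`
in at most `n` variables has a solution in `A`. -/
def NPure (S : Type u) [Monoid S] (A : Type v) [RAct S A] (n : ℕ) : Prop :=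
  ∀ E : Set (Eqn S A (Fin n)), E.Finite → Consistent S E →
    ∃ c : Fin n → A, IsSolution S id E c

/-- Almost pure: 1-absolutely pure. -/
def AlmostPure (S : Type u) [Monoid S] (A : Type v) [RAct S A] : Prop :=
  NPure S A 1

/-- Absolutely pure: `n`-absolutely pure for every `n`. -/
def AbsolutelyPure (S : Type u) [Monoid S] (A : Type v) [RAct S A] : Prop :=
  ∀ n : ℕ, NPure S A n

/-- The pairs `H(Σ)` in the free act coming from constant-free equations of `E`. -/
def Hcf (S : Type u) [Monoid S] {A : Type v} {X : Type w}
    (E : Set (Eqn S A X)) : Set ((X × S) × (X × S)) :=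
  {p | ∃ x u y v, Eqn.vv x u y v ∈ E ∧ p = ((x, u), (y, v))}

/-- The pairs `H(Σ) ∪ K(Σ)` on the disjoint union `A ⊔ F_S(X)`. -/
def HK (S : Type u) [Monoid S] {A : Type v} {X : Type w}
    (E : Set (Eqn S A X)) : Set ((A ⊕ X × S) × (A ⊕ X × S)) :=
  {p | (∃ x u y v, Eqn.vv x u y v ∈ E ∧ p = (Sum.inr (x, u), Sum.inr (y, v))) ∨
       (∃ x s a, Eqn.vc x s a ∈ E ∧ p = (Sum.inr (x, s), Sum.inl a))}

/-- Quotient of an act by a generated congruence. -/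
instance quotAct (S : Type u) [Monoid S] {A : Type v} [RAct S A] (H : Set (A × A)) :
    RAct S (Quot (congGen S H)) where
  act q s := Quot.map (fun a => a ⊳ s) (fun _a _b h => (isActCongr_congGen S H).act s h) q
  act_one := by
    rintro ⟨a⟩
    show Quot.mk _ (a ⊳ (1 : S)) = Quot.mk _ a
    rw [RAct.act_one]
  act_mul := by
    rintro ⟨a⟩ s t
    show Quot.mk _ (a ⊳ (s * t)) = Quot.mk _ (a ⊳ s ⊳ t)
    rw [RAct.act_mul]

/-- The canonical extension `A(Σ) = (A ⊔ F_S(X)) / κ_Σ`. -/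
abbrev ActExt (S : Type u) [Monoid S] {A : Type v} {X : Type w} [RAct S A]
    (E : Set (Eqn S A X)) : Type (max u v w) :=
  Quot (congGen S (HK S E))

/-- The natural map `ν_Σ : A → A(Σ)`. -/
def extOfBase (S : Type u) [Monoid S] {A : Type v} {X : Type w} [RAct S A]
    (E : Set (Eqn S A X)) (a : A) : ActExt S E :=
  Quot.mk _ (Sum.inl a)

/-- A finitely generated `S`-act. -/
def IsFG (S : Type u) [Monoid S] (A : Type v) [RAct S A] : Prop :=
  ∃ T : Finset A, ∀ a : A, ∃ t ∈ T, ∃ s : S, a = t ⊳ s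

/-- A monogenic (cyclic) `S`-act. -/
def Monogenic (S : Type u) [Monoid S] (C : Type v) [RAct S C] : Prop :=
  ∃ c : C, ∀ y : C, ∃ s : S, y = c ⊳ s

/-- `A` embeds into `C` as an `S`-act. -/
def ActEmbeds (S : Type u) [Monoid S] (A : Type v) (C : Type w) [RAct S A] [RAct S C] : Prop :=
  ∃ ι : A → C, IsRActHom S ι ∧ Function.Injective ι

/-- A finitely presented `S`-act: isomorphic to `F_S(X)/ρ` with `X` finite and
`ρ` a finitely generated congruence. -/
def IsFP (S : Type u) [Monoid S] (A : Type v) [RAct S A] : Prop :=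
  ∃ (n : ℕ) (H : Set ((Fin n × S) × (Fin n × S))), H.Finite ∧
    ∃ φ : Fin n × S → A, IsRActHom S φ ∧ Function.Surjective φ ∧
      ∀ p q : Fin n × S, φ p = φ q ↔ congGen S H p q

/-- A right coherent monoid. -/
def RightCoherent (S : Type u) [Monoid S] : Prop :=
  ∀ (A B : Type u) (_ : RAct S A) (_ : RAct S B) (ι : B → A),
    IsRActHom S ι → Function.Injective ι → IsFP S A → IsFG S B → IsFP S B

/-- The fem-property: every finitely generated `S`-act embeds into a monogenic act. -/
def FemProperty (S : Type u) [Monoid S] : Prop :=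
  ∀ (A : Type u) (_ : RAct S A), IsFG S A → ∃ (C : Type u) (_ : RAct S C),
    Monogenic S C ∧ ActEmbeds S A C

/-- A subact of an `S`-act. -/
structure Subact (S : Type u) [Monoid S] (B : Type v) [RAct S B] where
  carrier : Set B
  closed : ∀ b ∈ carrier, ∀ s : S, b ⊳ s ∈ carrier

instance subAct (S : Type u) [Monoid S] {B : Type v} [RAct S B] (T : Subact S B) :
    RAct S T.carrier where
  act a s := ⟨a.1 ⊳ s, T.closed a.1 a.2 s⟩
  act_one a := Subtype.ext (RAct.act_one a.1)
  act_mul a s t := Subtype.ext (RAct.act_mul a.1 s t)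


def BuiltFrom (S : Type u) [Monoid S] {A B : Type v} [RAct S A] [RAct S B]
    (ι : A → B) (P : ℕ → Prop) : Prop :=
  IsRActHom S ι ∧ Function.Injective ι ∧
  ∃ (ξ : Ordinal.{v}) (C : Ordinal.{v} → Subact S B),
    (C 0).carrier = Set.range ι ∧
    (∀ i j : Ordinal.{v}, i ≤ j → (C i).carrier ⊆ (C j).carrier) ∧
    (C ξ).carrier = Set.univ ∧
    (∀ ζ : Ordinal.{v}, ζ ≤ ξ → Order.IsSuccLimit ζ → (C ζ).carrier = ⋃ i ∈ Set.Iio ζ, (C i).carrier) ∧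
    (∀ i : Ordinal.{v}, i < ξ → ∃ m : ℕ, P m ∧
      (∃ E : Set (Eqn S (↥(C i).carrier) (Fin m)), Consistent S E ∧
        (∃ e : ActExt S E → B, IsRActHom S e ∧ Function.Injective e ∧
          Set.range e = (C (i + 1)).carrier ∧
          (∀ d : ↥(C i).carrier, e (extOfBase S E d) = d.1))))


/-!
`A(Σ)` is the free act over `A` carrying a solution of `Σ`: the classes `[(x, 1)]` form a
generic solution, every solution `c` in an act `C ⊇ A` induces a morphism `A(Σ) → C` over `A`
(because the kernel of `A ⊔ F_S(X) → C` is a congruence containing `H(Σ) ∪ K(Σ)`), and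
conversely a morphism over `A` carries the generic solution to a solution. Take `C = A`.
-/

section Extension

variable {S : Type u} [Monoid S]

theorem IsRActHom.sumElim {A : Type v} {B : Type w} {C : Type*} [RAct S A] [RAct S B] [RAct S C]
    {f : A → C} {g : B → C} (hf : IsRActHom S f) (hg : IsRActHom S g) :
    IsRActHom S (Sum.elim f g) := by
  rintro (a | b) s
  exacts [hf a s, hg b s]

def freeLift {X : Type w} {C : Type*} [RAct S C] (c : X → C) (p : X × S) : C :=
  c p.1 ⊳ p.2

theorem isRActHom_freeLift {X : Type w} {C : Type*} [RAct S C] (c : X → C) :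
    IsRActHom S (freeLift (S := S) c) :=
  fun p s => RAct.act_mul (c p.1) p.2 s

theorem eq_of_congGen {A : Type v} {C : Type*} [RAct S A] [RAct S C] {H : Set (A × A)}
    {f : A → C} (hf : IsRActHom S f) (hH : ∀ p ∈ H, f p.1 = f p.2) {a b : A}
    (hab : congGen S H a b) : f a = f b :=
  hab (fun a b => f a = f b) ⟨fun _ => rfl, Eq.symm, Eq.trans, fun s h => by rw [hf, hf, h]⟩ hH

theorem isRActHom_quot_lift {A : Type v} {C : Type*} [RAct S A] [RAct S C] {H : Set (A × A)}
    {f : A → C} (hf : IsRActHom S f) (hfH : ∀ a b, congGen S H a b → f a = f b) :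
    IsRActHom S (Quot.lift f hfH) := by
  rintro ⟨a⟩ s
  exact hf a s

theorem IsSolution.comp {A : Type v} {X : Type w} {B C : Type*} [RAct S B] [RAct S C]
    {ι : A → B} {E : Set (Eqn S A X)} {b : X → B} (hb : IsSolution S ι E b)
    {θ : B → C} (hθ : IsRActHom S θ) : IsSolution S (θ ∘ ι) E (θ ∘ b) :=
  ⟨fun x s y t h => by simp only [Function.comp_apply, ← hθ _ s, ← hθ _ t, hb.1 x s y t h],
   fun x s a h => by simp only [Function.comp_apply, ← hθ _ s, hb.2 x s a h]⟩

theorem sumElim_eq_of_mem_HK {A : Type v} {X : Type w} {C : Type*} [RAct S C] {ι : A → C}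
    {E : Set (Eqn S A X)} {c : X → C} (hc : IsSolution S ι E c) :
    ∀ p ∈ HK S E, Sum.elim ι (freeLift c) p.1 = Sum.elim ι (freeLift c) p.2 := by
  rintro _ (⟨x, s, y, t, h, rfl⟩ | ⟨x, s, a, h, rfl⟩)
  exacts [hc.1 x s y t h, hc.2 x s a h]

variable {A : Type v} {X : Type w} [RAct S A] (E : Set (Eqn S A X))

def extOfVar (x : X) : ActExt S E :=
  Quot.mk _ (Sum.inr (x, 1))

theorem extOfVar_act (x : X) (s : S) : extOfVar E x ⊳ s = Quot.mk _ (Sum.inr (x, s)) := by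
  show Quot.mk _ (Sum.inr (x, 1 * s)) = _
  rw [one_mul]

theorem isSolution_extOfVar : IsSolution S (extOfBase S E) E (extOfVar E) := by
  constructor
  · intro x s y t h
    rw [extOfVar_act, extOfVar_act]
    exact Quot.sound fun _ _ hH => hH _ (Or.inl ⟨x, s, y, t, h, rfl⟩)
  · intro x s a h
    rw [extOfVar_act]
    exact Quot.sound fun _ _ hH => hH _ (Or.inr ⟨x, s, a, h, rfl⟩)

variable {E} {C : Type*} [RAct S C] {ι : A → C} {c : X → C}

def ActExt.lift (hι : IsRActHom S ι) (hc : IsSolution S ι E c) : ActExt S E → C :=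
  Quot.lift (Sum.elim ι (freeLift c)) fun _ _ =>
    eq_of_congGen (hι.sumElim (isRActHom_freeLift c)) (sumElim_eq_of_mem_HK hc)

theorem ActExt.isRActHom_lift (hι : IsRActHom S ι) (hc : IsSolution S ι E c) :
    IsRActHom S (ActExt.lift hι hc) :=
  isRActHom_quot_lift (hι.sumElim (isRActHom_freeLift c)) _

theorem ActExt.lift_extOfBase (hι : IsRActHom S ι) (hc : IsSolution S ι E c) (a : A) :
    ActExt.lift hι hc (extOfBase S E a) = ι a :=
  rfl

end Extension

theorem solution_iff_retract_general (S : Type u) [Monoid S] (A : Type v) (X : Type w)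
    [RAct S A] (E : Set (Eqn S A X)) :
    (∃ c : X → A, IsSolution S id E c) ↔
      ∃ θ : ActExt S E → A, IsRActHom S θ ∧ ∀ a : A, θ (extOfBase S E a) = a := by
  constructor
  · rintro ⟨c, hc⟩
    have hid : IsRActHom S (id : A → A) := fun _ _ => rfl
    exact ⟨ActExt.lift hid hc, ActExt.isRActHom_lift hid hc, ActExt.lift_extOfBase hid hc⟩
  · rintro ⟨θ, hθ, hθν⟩
    have hθν' : θ ∘ extOfBase S E = id := funext hθν
    exact ⟨θ ∘ extOfVar E, hθν' ▸ (isSolution_extOfVar E).comp hθ⟩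

/-- For consistent `Σ`, `Σ` has a solution in `A` iff `A` is a retract of `A(Σ)`. -/
theorem solution_iff_retract (S : Type u) [Monoid S] (A : Type v) (X : Type w)
    [RAct S A] (E : Set (Eqn S A X)) (hE : Consistent S E) :
    (∃ c : X → A, IsSolution S id E c) ↔
      ∃ θ : ActExt S E → A, IsRActHom S θ ∧ ∀ a : A, θ (extOfBase S E a) = a :=
  solution_iff_retract_general S A X E
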